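/- arXiv:math/0602167 — 3 statements merged into one kernel-verified Lean document; each statement's English description precedes it below -/
import Mathlib

section
/- The holonomy of the ℤ₄-bundle constructed from a square root of the canonical bundle of a symplectic vector space equals the mod 4 reduction of the Maslov index; concretely: let n ≥ 1 and let U : [0,1] → M_n(ℂ) be a continuous path of unitary matrices such that U(1) = U(0)·O for some real orthogonal matrix O (so that U descends to a loop in the Lagrangian Grassmannian U(n)/O(n)). Let θ : [0,1] → ℝ be continuous with det(U(t))² = e^{iθ(t)} for all t, and let v : [0,1] → ℂ be continuous with v(t)² · det(U(t)) ∈ {1, −1} for all t. Then there is an integer m (the Maslov index of the loop) with θ(1) − θ(0) = 2πm, and v(1) = (−i)^m · v(0). -/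
/-!
The square `det(U)²` is invariant under `U ↦ U·O` for real orthogonal `O`, since `det O = ±1`;
this makes the endpoints of `θ` differ by a multiple `2πm` of `2π`. The function
`w = v · exp(iθ/4)` is continuous with `w⁴ = (v² det U)² = 1`, so it takes values in the finite
set of fourth roots of unity and is therefore constant on `[0,1]`. Since
`exp(iθ(1)/4) = exp(iθ(0)/4) · iᵐ`, the equality `w(1) = w(0)` is `v(1) = (-i)ᵐ v(0)`.
-/

open Matrix

lemma IsPreconnected.eq_of_continuousOn_pow_eq_one {X R : Type*} [TopologicalSpace X]
    [CommRing R] [IsDomain R] [TopologicalSpace R] [T1Space R] {S : Set X}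
    (hS : IsPreconnected S) {f : X → R} (hf : ContinuousOn f S) {k : ℕ} (hk : k ≠ 0)
    (hpow : ∀ t ∈ S, f t ^ k = 1) {x y : X} (hx : x ∈ S) (hy : y ∈ S) : f x = f y :=
  hS.constant_of_mapsTo (Polynomial.nthRootsFinset k (1 : R)).finite_toSet.isDiscrete hf
    (fun t ht => (Polynomial.mem_nthRootsFinset (Nat.pos_of_ne_zero hk) 1).mpr (hpow t ht))
    hx hy

lemma Matrix.det_sq_eq_one_of_transpose_mul_self {n R : Type*} [Fintype n] [DecidableEq n]
    [CommRing R] {O : Matrix n n R} (hO : Oᵀ * O = 1) : O.det ^ 2 = 1 := by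
  simpa [sq, det_transpose] using congrArg det hO

lemma Matrix.det_mul_map_sq_of_transpose_mul_self {n R S : Type*} [Fintype n] [DecidableEq n]
    [CommRing R] [CommRing S] (f : R →+* S) (A : Matrix n n S) {O : Matrix n n R}
    (hO : Oᵀ * O = 1) : (A * O.map f).det ^ 2 = A.det ^ 2 := by
  have hdet : (O.map f).det = f O.det := (f.map_det O).symm
  rw [det_mul, mul_pow, hdet, ← map_pow, det_sq_eq_one_of_transpose_mul_self hO, map_one, mul_one]

lemma Complex.exists_int_sub_eq_two_pi_mul_of_exp_I_mul_eq {x y : ℝ}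
    (h : exp (I * x) = exp (I * y)) : ∃ m : ℤ, x - y = 2 * Real.pi * m := by
  obtain ⟨m, hm⟩ := Circle.exp_eq_exp.mp (Subtype.ext (by simpa [mul_comm] using h))
  exact ⟨m, by linarith⟩

lemma Complex.exp_I_mul_div_four_of_sub_eq_two_pi_mul {x y : ℝ} {m : ℤ}
    (h : x - y = 2 * Real.pi * m) : exp (I * x / 4) = exp (I * y / 4) * I ^ m := by
  have hx : (x : ℂ) = y + 2 * Real.pi * m := by
    exact_mod_cast (by linarith : x = y + 2 * Real.pi * m)
  have hsplit : I * (x : ℂ) / 4 = I * y / 4 + m * (Real.pi / 2 * I) := by rw [hx]; ring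
  rw [hsplit, exp_add, exp_int_mul, exp_pi_div_two_mul_I]

theorem maslov_holonomy_general {n : ℕ}
    (U : ℝ → Matrix (Fin n) (Fin n) ℂ)
    (O : Matrix (Fin n) (Fin n) ℝ) (hO : Oᵀ * O = 1)
    (hloop : U 1 = U 0 * O.map (Complex.ofReal))
    (θ : ℝ → ℝ) (hθcont : ContinuousOn θ (Set.Icc 0 1))
    (hθ : ∀ t ∈ Set.Icc (0:ℝ) 1, (U t).det ^ 2 = Complex.exp (Complex.I * θ t))
    (v : ℝ → ℂ) (hvcont : ContinuousOn v (Set.Icc 0 1))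
    (hv : ∀ t ∈ Set.Icc (0:ℝ) 1, v t ^ 2 * (U t).det = 1 ∨ v t ^ 2 * (U t).det = -1) :
    ∃ m : ℤ, θ 1 - θ 0 = 2 * Real.pi * m ∧ v 1 = (-Complex.I) ^ m * v 0 := by
  have h0 : (0 : ℝ) ∈ Set.Icc (0 : ℝ) 1 := by simp
  have h1 : (1 : ℝ) ∈ Set.Icc (0 : ℝ) 1 := by simp
  obtain ⟨m, hm⟩ : ∃ m : ℤ, θ 1 - θ 0 = 2 * Real.pi * m := by
    apply Complex.exists_int_sub_eq_two_pi_mul_of_exp_I_mul_eq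
    rw [← hθ 1 h1, ← hθ 0 h0, hloop]
    exact det_mul_map_sq_of_transpose_mul_self Complex.ofRealHom _ hO
  refine ⟨m, hm, ?_⟩
  set w : ℝ → ℂ := fun t => v t * Complex.exp (Complex.I * θ t / 4)
  have hw_pow : ∀ t ∈ Set.Icc (0 : ℝ) 1, w t ^ 4 = 1 := by
    intro t ht
    have hexp : Complex.exp (Complex.I * θ t / 4) ^ 4 = (U t).det ^ 2 := by
      rw [hθ t ht, ← Complex.exp_nat_mul]
      ring_nf
    calc w t ^ 4 = (v t ^ 2 * (U t).det) ^ 2 := by rw [mul_pow, hexp]; ring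
      _ = 1 := by rcases hv t ht with h | h <;> simp [h]
  have hw_cont : ContinuousOn w (Set.Icc 0 1) := by
    have hθcont' := Complex.continuous_ofReal.comp_continuousOn hθcont
    fun_prop
  have hw : w 1 = w 0 :=
    isPreconnected_Icc.eq_of_continuousOn_pow_eq_one hw_cont four_ne_zero hw_pow h1 h0
  have hI : (-Complex.I) ^ m * Complex.I ^ m = 1 := by
    rw [← mul_zpow, neg_mul, Complex.I_mul_I, neg_neg, _root_.one_zpow]
  simp only [w, Complex.exp_I_mul_div_four_of_sub_eq_two_pi_mul hm] at hw
  have hv1 : v 1 * Complex.I ^ m = v 0 :=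
    mul_right_cancel₀ (Complex.exp_ne_zero (Complex.I * θ 0 / 4)) (by linear_combination hw)
  rw [← hv1, mul_left_comm, hI, mul_one]

theorem maslov_holonomy {n : ℕ} (hn : 1 ≤ n)
    (U : ℝ → Matrix (Fin n) (Fin n) ℂ)
    (hUcont : ContinuousOn U (Set.Icc 0 1))
    (hUunitary : ∀ t ∈ Set.Icc (0:ℝ) 1, (U t)ᴴ * U t = 1)
    (O : Matrix (Fin n) (Fin n) ℝ) (hO : Oᵀ * O = 1)
    (hloop : U 1 = U 0 * O.map (Complex.ofReal))
    (θ : ℝ → ℝ) (hθcont : ContinuousOn θ (Set.Icc 0 1))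
    (hθ : ∀ t ∈ Set.Icc (0:ℝ) 1, (U t).det ^ 2 = Complex.exp (Complex.I * θ t))
    (v : ℝ → ℂ) (hvcont : ContinuousOn v (Set.Icc 0 1))
    (hv : ∀ t ∈ Set.Icc (0:ℝ) 1, v t ^ 2 * (U t).det = 1 ∨ v t ^ 2 * (U t).det = -1) :
    ∃ m : ℤ, θ 1 - θ 0 = 2 * Real.pi * m ∧ v 1 = (-Complex.I) ^ m * v 0 :=
  maslov_holonomy_general U O hO hloop θ hθcont hθ v hvcont hv
end

section
/- Counting of Bohr–Sommerfeld points: let α < β be real numbers, let a, a₁ : [α,β] → ℝ be C¹ functions with a'(λ) > 0 for all λ ∈ [α,β], and let ε ∈ {0,1}. For each positive integer k set Σ(k) = {λ ∈ (α,β) : a(λ) + k^{−1}(a₁(λ) + επ) ∈ (2π/k)ℤ}. Then there exist a constant C > 0 and an integer K such that for all k ≥ K the set Σ(k) is finite and |card Σ(k) − (k/2π)(a(β) − a(α))| ≤ C. -/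
/-!
For large `k` the function `f l = a l + k⁻¹ (a₁ l + επ)` is strictly increasing on `[α, β]`:
`a'` is bounded below by a positive constant and `a₁'` is bounded, so the perturbation cannot
destroy the positivity of the derivative. A continuous strictly increasing function on `[α, β]`
maps the solutions of `f l ∈ (2π/k)ℤ` bijectively onto the lattice points in `(f α, f β)`, of
which there are `(k/2π)(f β - f α)` up to an error `1`; finally
`(k/2π)(f β - f α) = (k/2π)(a β - a α) + (a₁ β - a₁ α)/2π`.
-/

open Set Filter Topology

lemma Int.abs_ncard_preimage_Ioo_sub_le {x y : ℝ} (hxy : x ≤ y) :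
    |((Int.cast ⁻¹' Ioo x y : Set ℤ).ncard : ℝ) - (y - x)| ≤ 1 := by
  rw [Int.preimage_Ioo, ← Finset.coe_Ioo, ncard_coe_finset, Int.card_Ioo, ← Int.cast_natCast,
    Int.toNat_eq_max]
  have := Int.floor_le x
  have := Int.lt_floor_add_one x
  have := Int.le_ceil y
  have := Int.ceil_lt_add_one y
  push_cast
  rw [abs_le]
  constructor <;> cases max_cases ((⌈y⌉ : ℝ) - ⌊x⌋ - 1) 0 <;> linarith

lemma ContinuousOn.bijOn_Ioo_inter_preimage_of_strictMonoOn {X Y : Type*}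
    [ConditionallyCompleteLinearOrder X] [TopologicalSpace X] [OrderTopology X]
    [DenselyOrdered X] [LinearOrder Y] [TopologicalSpace Y] [OrderClosedTopology Y]
    {f : X → Y} {α β : X} (hαβ : α ≤ β) (hf : ContinuousOn f (Icc α β))
    (hmono : StrictMonoOn f (Icc α β)) (t : Set Y) :
    BijOn f (Ioo α β ∩ f ⁻¹' t) (Ioo (f α) (f β) ∩ t) := by
  have hinj : InjOn f (Ioo α β ∩ f ⁻¹' t) :=
    hmono.injOn.mono (inter_subset_left.trans Ioo_subset_Icc_self)
  simpa only [image_inter_preimage, hf.image_Ioo_of_strictMonoOn hαβ hmono] using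
    hinj.bijOn_image

lemma bijOn_intCast_mul_preimage_Ioo {c : ℝ} (hc : 0 < c) (u v : ℝ) :
    BijOn (fun m : ℤ => c * m) (Int.cast ⁻¹' Ioo (u / c) (v / c))
      (Ioo u v ∩ range (fun m : ℤ => c * m)) := by
  have hinj : Function.Injective (fun m : ℤ => c * m) :=
    (mul_right_injective₀ hc.ne').comp Int.cast_injective
  have hpre : (fun m : ℤ => c * m) ⁻¹' Ioo u v = Int.cast ⁻¹' Ioo (u / c) (v / c) := by
    rw [← preimage_const_mul_Ioo₀ _ _ hc]
    rfl
  rw [← hpre, ← image_preimage_eq_inter_range]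
  exact hinj.injOn.bijOn_image

lemma finite_and_abs_ncard_sub_le_of_strictMonoOn {f : ℝ → ℝ} {α β c : ℝ} (hαβ : α ≤ β)
    (hc : 0 < c) (hf : ContinuousOn f (Icc α β)) (hmono : StrictMonoOn f (Icc α β)) :
    {l ∈ Ioo α β | ∃ m : ℤ, f l = c * m}.Finite ∧
      |({l ∈ Ioo α β | ∃ m : ℤ, f l = c * m}.ncard : ℝ) - (f β - f α) / c| ≤ 1 := by
  have hS : {l ∈ Ioo α β | ∃ m : ℤ, f l = c * m} =
      Ioo α β ∩ f ⁻¹' range (fun m : ℤ => c * m) := by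
    ext l
    simp [eq_comm]
  have hhits := hf.bijOn_Ioo_inter_preimage_of_strictMonoOn hαβ hmono
    (range (fun m : ℤ => c * m))
  have hlattice := bijOn_intCast_mul_preimage_Ioo hc (f α) (f β)
  rw [hS, hhits.finite_iff_finite, ← hlattice.finite_iff_finite, hhits.ncard_eq,
    ← hlattice.ncard_eq, sub_div]
  refine ⟨by rw [Int.preimage_Ioo]; exact finite_Ioo _ _, Int.abs_ncard_preimage_Ioo_sub_le ?_⟩
  have := hmono.monotoneOn (left_mem_Icc.2 hαβ) (right_mem_Icc.2 hαβ) hαβ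
  gcongr

lemma IsCompact.eventually_forall_pos_add_mul {X : Type*} [TopologicalSpace X] {s : Set X}
    (hs : IsCompact s) {f g : X → ℝ} (hf : ContinuousOn f s) (hg : ContinuousOn g s)
    (hpos : ∀ x ∈ s, 0 < f x) :
    ∀ᶠ t in 𝓝 (0 : ℝ), ∀ x ∈ s, 0 < f x + t * g x := by
  obtain ⟨c, hc, hcf⟩ := hs.exists_forall_le' hf hpos
  obtain ⟨M, hM⟩ := hs.exists_bound_of_continuousOn hg
  have hsmall : ∀ᶠ t in 𝓝 (0 : ℝ), |t| * M < c :=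
    ((continuous_abs.mul continuous_const).tendsto' 0 0 (by simp)).eventually (gt_mem_nhds hc)
  filter_upwards [hsmall] with t ht x hx
  have hgx : |t * g x| ≤ |t| * M := by
    rw [abs_mul]
    exact mul_le_mul_of_nonneg_left (hM x hx) (abs_nonneg t)
  linarith [hcf x hx, neg_abs_le (t * g x)]

lemma eventually_strictMonoOn_add_mul {a b : ℝ → ℝ} {α β : ℝ} (hαβ : α < β)
    (ha : ContDiffOn ℝ 1 a (Icc α β)) (hb : ContDiffOn ℝ 1 b (Icc α β))
    (ha' : ∀ l ∈ Icc α β, 0 < derivWithin a (Icc α β) l) :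
    ∀ᶠ t in 𝓝 (0 : ℝ), StrictMonoOn (fun l => a l + t * b l) (Icc α β) := by
  have hU := uniqueDiffOn_Icc hαβ
  filter_upwards [isCompact_Icc.eventually_forall_pos_add_mul
    (ha.continuousOn_derivWithin hU le_rfl) (hb.continuousOn_derivWithin hU le_rfl) ha']
    with t ht
  refine strictMonoOn_of_hasDerivWithinAt_pos (convex_Icc α β)
    (ha.continuousOn.add (continuousOn_const.mul hb.continuousOn)) (fun l hl => ?_)
    (fun l hl => ht l (interior_subset hl))
  have hl' := interior_subset hl
  exact ((ha.differentiableOn one_ne_zero l hl').hasDerivWithinAt.add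
    ((hb.differentiableOn one_ne_zero l hl').hasDerivWithinAt.const_mul t)).mono interior_subset

theorem bohr_sommerfeld_counting_general
    (α β : ℝ) (hαβ : α < β)
    (a a₁ : ℝ → ℝ)
    (ha : ContDiffOn ℝ 1 a (Set.Icc α β))
    (ha₁ : ContDiffOn ℝ 1 a₁ (Set.Icc α β))
    (ha' : ∀ t ∈ Set.Icc α β, 0 < derivWithin a (Set.Icc α β) t)
    (ε : ℝ) :
    ∃ C : ℝ, 0 < C ∧ ∃ K : ℕ, ∀ k : ℕ, K ≤ k →
      (let BS : Set ℝ :=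
        {l ∈ Set.Ioo α β | ∃ m : ℤ, a l + (k : ℝ)⁻¹ * (a₁ l + ε * Real.pi) =
          (2 * Real.pi / k) * m};
      BS.Finite ∧
        |(BS.ncard : ℝ) - (k / (2 * Real.pi)) * (a β - a α)| ≤ C) := by
  have hmono : ∀ᶠ k : ℕ in atTop,
      StrictMonoOn (fun l => a l + (k : ℝ)⁻¹ * (a₁ l + ε * Real.pi)) (Icc α β) :=
    (tendsto_inv_atTop_nhds_zero_nat (𝕜 := ℝ)).eventually
      (eventually_strictMonoOn_add_mul hαβ ha (ha₁.add contDiffOn_const) ha')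
  obtain ⟨K, hK⟩ := eventually_atTop.1 (hmono.and (eventually_gt_atTop 0))
  refine ⟨1 + |a₁ β - a₁ α| / (2 * Real.pi), by positivity, K, fun k hk => ?_⟩
  obtain ⟨hmono_k, hk0⟩ := hK k hk
  have hcont : ContinuousOn (fun l => a l + (k : ℝ)⁻¹ * (a₁ l + ε * Real.pi)) (Icc α β) :=
    ha.continuousOn.add (continuousOn_const.mul (ha₁.continuousOn.add continuousOn_const))
  obtain ⟨hfin, hcount⟩ := finite_and_abs_ncard_sub_le_of_strictMonoOn hαβ.le
    (by positivity : 0 < 2 * Real.pi / k) hcont hmono_k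
  refine ⟨hfin, ?_⟩
  have hsplit : (a β + (k : ℝ)⁻¹ * (a₁ β + ε * Real.pi) -
      (a α + (k : ℝ)⁻¹ * (a₁ α + ε * Real.pi))) / (2 * Real.pi / k) =
      k / (2 * Real.pi) * (a β - a α) + (a₁ β - a₁ α) / (2 * Real.pi) := by
    field_simp
    ring
  rw [hsplit] at hcount
  calc _ ≤ _ + _ :=
        abs_sub_le _ (k / (2 * Real.pi) * (a β - a α) + (a₁ β - a₁ α) / (2 * Real.pi)) _
    _ ≤ 1 + |a₁ β - a₁ α| / (2 * Real.pi) := by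
      rw [add_sub_cancel_left, abs_div, abs_of_pos (by positivity : 0 < 2 * Real.pi)]
      linarith

theorem bohr_sommerfeld_counting
    (α β : ℝ) (hαβ : α < β)
    (a a₁ : ℝ → ℝ)
    (ha : ContDiffOn ℝ 1 a (Set.Icc α β))
    (ha₁ : ContDiffOn ℝ 1 a₁ (Set.Icc α β))
    (ha' : ∀ t ∈ Set.Icc α β, 0 < derivWithin a (Set.Icc α β) t)
    (ε : ℝ) (hε : ε = 0 ∨ ε = 1) :
    ∃ C : ℝ, 0 < C ∧ ∃ K : ℕ, ∀ k : ℕ, K ≤ k →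
      (let BS : Set ℝ :=
        {l ∈ Set.Ioo α β | ∃ m : ℤ, a l + (k : ℝ)⁻¹ * (a₁ l + ε * Real.pi) =
          (2 * Real.pi / k) * m};
      BS.Finite ∧
        |(BS.ncard : ℝ) - (k / (2 * Real.pi)) * (a β - a α)| ≤ C) :=
  bohr_sommerfeld_counting_general α β hαβ a a₁ ha ha₁ ha' ε
end

section
/- Riemann-sum asymptotics for spectral counting: let S₀, S₁ : ℝ → ℝ be smooth functions such that there is δ > 0 with S₀'(λ) ≥ δ for all λ and such that all derivatives of S₀ and S₁ of order ≥ 1 are bounded, and let g : ℝ → ℂ be smooth with compact support. For k large enough, S_k := S₀ + k^{−1}S₁ is a smooth diffeomorphism of ℝ onto ℝ, and Σ_{n ∈ ℤ} g(S_k^{−1}(2πn/k)) = (k/2π) ∫_ℝ g(λ) S_k'(λ) dλ + O(k^{−1}) as k → ∞. -/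
open MeasureTheory Filter Function

theorem exists_smooth_global_inverse (S : ℝ → ℝ) (hS : ContDiff ℝ (⊤ : ℕ∞) S) (c : ℝ) (hc : 0 < c)
    (hd : ∀ t, c ≤ deriv S t) :
    ∃ R : ℝ → ℝ, ContDiff ℝ (⊤ : ℕ∞) R ∧ Function.LeftInverse R S ∧ Function.RightInverse R S := by
  have hdiff : Differentiable ℝ S := hS.differentiable (by simp)
  have mono : StrictMono S := strictMono_of_deriv_pos fun x => lt_of_lt_of_le hc (hd x)
  have hmul : ∀ x : ℝ, HasDerivAt (fun t : ℝ => c * t) c x := fun x => by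
    simpa using (hasDerivAt_id x).const_mul c
  have hφ : Monotone fun t => S t - c * t := by
    apply monotone_of_deriv_nonneg (hdiff.sub fun x => (hmul x).differentiableAt)
    intro x
    rw [deriv_sub (hdiff x) (hmul x).differentiableAt, (hmul x).deriv]
    linarith [hd x]
  have htop : Tendsto S atTop atTop := by
    apply tendsto_atTop_mono' _ _ (tendsto_atTop_add_const_left atTop (S 0 - c * 0)
      (Tendsto.const_mul_atTop hc tendsto_id))
    filter_upwards [eventually_ge_atTop (0:ℝ)] with t ht
    have := hφ ht
    simp only [id] at *
    linarith
  have hbot : Tendsto S atBot atBot := by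
    apply tendsto_atBot_mono' _ _ (tendsto_atBot_add_const_left atBot (S 0 - c * 0)
      (Tendsto.const_mul_atBot hc tendsto_id))
    filter_upwards [eventually_le_atBot (0:ℝ)] with t ht
    have := hφ ht
    simp only [id] at *
    linarith
  have hsurj : Function.Surjective S := hS.continuous.surjective htop hbot
  let e : ℝ ≃o ℝ := StrictMono.orderIsoOfSurjective S mono hsurj
  refine ⟨e.symm, ?_, fun x => ?_, fun x => ?_⟩
  · -- smoothness of the inverse
    rw [contDiff_iff_contDiffAt]
    intro a
    let homeo := e.toHomeomorph
    let P := homeo.toOpenPartialHomeomorph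
    have key : ContDiffAt ℝ (⊤ : ℕ∞) P.symm a := by
      set b := e.symm a with hb
      have hSb : deriv S b ≠ 0 := ne_of_gt (lt_of_lt_of_le hc (hd b))
      let f₀' : ℝ ≃L[ℝ] ℝ := ContinuousLinearEquiv.unitsEquivAut ℝ (Units.mk0 (deriv S b) hSb)
      apply OpenPartialHomeomorph.contDiffAt_symm P (by simp [P]) (f₀' := f₀')
      · have hda : HasFDerivAt S (ContinuousLinearMap.smulRight (1 : ℝ →L[ℝ] ℝ) (deriv S b)) b :=
          ((hdiff b).hasDerivAt).hasFDerivAt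
        have hcoe : (f₀' : ℝ →L[ℝ] ℝ) = ContinuousLinearMap.smulRight (1 : ℝ →L[ℝ] ℝ) (deriv S b) := by
          apply ContinuousLinearMap.ext
          intro x
          simp [f₀', ContinuousLinearEquiv.unitsEquivAut, mul_comm]
        have h1 : (P : ℝ → ℝ) = S := rfl
        have h2 : (P.symm : ℝ → ℝ) = ⇑e.symm := rfl
        rw [h1, h2, hcoe, ← hb]
        exact hda
      · exact hS.contDiffAt
    have h2 : (P.symm : ℝ → ℝ) = ⇑e.symm := rfl
    rw [h2] at key
    exact key
  · exact e.symm_apply_apply x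
  · exact e.apply_symm_apply x

theorem trapezoid_single (h h' h'' : ℝ → ℂ)
    (hd1 : ∀ x, HasDerivAt h (h' x) x) (hd2 : ∀ x, HasDerivAt h' (h'' x) x)
    (D : ℝ) (hD : ∀ x, ‖h'' x‖ ≤ D)
    (a s : ℝ) (hs : 0 ≤ s) :
    ‖((s/2 : ℝ) • (h a + h (a+s))) - ∫ x in a..(a+s), h x‖ ≤ D * s^3 / 2 := by
  have hch : Continuous h := by
    rw [continuous_iff_continuousAt]; exact fun x => (hd1 x).continuousAt
  have hch' : Continuous h' := by
    rw [continuous_iff_continuousAt]; exact fun x => (hd2 x).continuousAt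
  set b := a + s with hb
  set w : ℝ → ℂ := fun t => (((a + s - t) - s/2 : ℝ) : ℂ) with hw
  have hcw : Continuous w := by
    apply Continuous.comp Complex.continuous_ofReal; continuity
  have hdw : ∀ t : ℝ, HasDerivAt w (-1) t := by
    intro t
    have h2 := ((((hasDerivAt_id t).const_sub (a+s)).sub_const (s/2))).ofReal_comp
    have h3 : ((-1:ℝ):ℂ) = -1 := by norm_num
    rw [← h3]; exact h2
  have ibp : ∫ x in a..b, w x * h' x
      = w b * h b - w a * h a - ∫ x in a..b, (-1) * h x := by
    apply intervalIntegral.integral_mul_deriv_eq_deriv_mul (u' := fun _ => (-1 : ℂ))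
    · exact fun x _ => hdw x
    · exact fun x _ => hd1 x
    · exact intervalIntegrable_const
    · exact hch'.intervalIntegrable _ _
  have hwb : w b = ((-(s/2) : ℝ) : ℂ) := by rw [hw, hb]; norm_num
  have hwa : w a = (((s/2) : ℝ) : ℂ) := by rw [hw]; push_cast; ring
  have key : ((s/2 : ℝ) • (h a + h b)) - (∫ x in a..b, h x) = - ∫ x in a..b, w x * h' x := by
    rw [ibp, hwa, hwb]
    have : ∫ x in a..b, (-1 : ℂ) * h x = - ∫ x in a..b, h x := by
      rw [← intervalIntegral.integral_neg]; congr 1; ext x; ring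
    rw [this, Complex.real_smul]
    push_cast
    ring
  have hw0 : (∫ x in a..b, w x) = 0 := by
    rw [hw]
    rw [intervalIntegral.integral_ofReal]
    have h1 : (fun x : ℝ => a + s - x - s/2) = fun x : ℝ => (a + s - s/2) - x := by
      ext x; ring
    have h2 : (∫ x in a..b, (a + s - x - s/2 : ℝ)) = 0 := by
      rw [h1, intervalIntegral.integral_sub intervalIntegrable_const intervalIntegral.intervalIntegrable_id,
        integral_id, intervalIntegral.integral_const]
      rw [hb]; simp; ring
    rw [h2]; simp
  have hsplit : (∫ x in a..b, w x * h' x) = ∫ x in a..b, w x * (h' x - h' a) := by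
    have heq : (∫ x in a..b, w x * (h' x - h' a))
        = (∫ x in a..b, w x * h' x) - (∫ x in a..b, w x * h' a) := by
      rw [← intervalIntegral.integral_sub]
      · congr 1; ext x; ring
      · exact (hcw.mul hch').intervalIntegrable _ _
      · exact (hcw.mul continuous_const).intervalIntegrable _ _
    rw [heq, intervalIntegral.integral_mul_const, hw0]
    ring
  have hD0 : 0 ≤ D := le_trans (norm_nonneg _) (hD 0)
  have hbound : ‖∫ x in a..b, w x * (h' x - h' a)‖ ≤ (s/2 * (D * s)) * |b - a| := by
    apply intervalIntegral.norm_integral_le_of_norm_le_const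
    intro x hx
    rw [Set.uIoc_of_le (by linarith : a ≤ b)] at hx
    have hx1 : a ≤ x := le_of_lt hx.1
    have hx2 : x ≤ a + s := hx.2
    rw [norm_mul]
    have h1 : ‖w x‖ ≤ s/2 := by
      simp only [hw, Complex.norm_real, Real.norm_eq_abs]
      rw [abs_le]
      exact ⟨by linarith, by linarith⟩
    have h2 : ‖h' x - h' a‖ ≤ D * s := by
      have := convex_univ.norm_image_sub_le_of_norm_hasDerivWithin_le
        (f := h') (f' := h'') (fun y _ => (hd2 y).hasDerivWithinAt)
        (fun y _ => hD y) (Set.mem_univ a) (Set.mem_univ x)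
      apply le_trans this
      have : ‖x - a‖ ≤ s := by
        rw [Real.norm_eq_abs, abs_of_nonneg (by linarith)]; linarith
      exact mul_le_mul_of_nonneg_left this hD0
    calc ‖w x‖ * ‖h' x - h' a‖ ≤ (s/2) * (D * s) := by
          apply mul_le_mul h1 h2 (norm_nonneg _) (by positivity)
      _ = s/2 * (D * s) := rfl
  rw [key, norm_neg, hsplit]
  apply le_trans hbound
  have habs : |b - a| = s := by rw [hb]; simp [abs_of_nonneg hs]
  rw [habs]
  apply le_of_eq
  ring

theorem trapsum_algebra (f : ℕ → ℂ) (s : ℝ) (n : ℕ) :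
    ∑ i ∈ Finset.range n, (s/2 : ℝ) • (f i + f (i+1))
      = (s : ℝ) • (∑ i ∈ Finset.range (n+1), f i) - (s/2 : ℝ) • (f 0 + f n) := by
  induction n with
  | zero => simp [Complex.real_smul]; ring
  | succ n ih =>
    rw [Finset.sum_range_succ, ih, Finset.sum_range_succ (n := n+1)]
    simp only [Complex.real_smul]
    push_cast
    ring

theorem trapezoid_sum (h h' h'' : ℝ → ℂ)
    (hd1 : ∀ x, HasDerivAt h (h' x) x) (hd2 : ∀ x, HasDerivAt h' (h'' x) x)
    (D : ℝ) (hD : ∀ x, ‖h'' x‖ ≤ D)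
    (s : ℝ) (hs : 0 ≤ s) (c : ℝ) (n : ℕ) :
    ‖(∑ i ∈ Finset.range n, (s/2 : ℝ) • (h (c + i*s) + h (c + (i+1)*s)))
        - ∫ x in c..(c + n*s), h x‖ ≤ n * (D * s^3 / 2) := by
  have hch : Continuous h := by
    rw [continuous_iff_continuousAt]; exact fun x => (hd1 x).continuousAt
  set a : ℕ → ℝ := fun i => c + i*s with ha
  have hsum : ∑ i ∈ Finset.range n, ∫ x in (a i)..(a (i+1)), h x = ∫ x in (a 0)..(a n), h x :=
    intervalIntegral.sum_integral_adjacent_intervals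
      (fun i _ => hch.intervalIntegrable _ _)
  have ha0 : a 0 = c := by simp [ha]
  have han : a n = c + n*s := rfl
  have hL : (∑ i ∈ Finset.range n, (s/2 : ℝ) • (h (c + i*s) + h (c + (i+1)*s)))
      = ∑ i ∈ Finset.range n, (s/2 : ℝ) • (h (a i) + h (a (i+1))) := by
    apply Finset.sum_congr rfl
    intro i _
    have e1 : c + (i:ℝ)*s = a i := rfl
    have e2 : c + ((i:ℝ)+1)*s = a (i+1) := by simp only [ha]; push_cast; ring
    rw [e1, e2]
  rw [hL, ← han, ← ha0, ← hsum, ← Finset.sum_sub_distrib]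
  apply le_trans (norm_sum_le _ _)
  have hterm : ∀ i ∈ Finset.range n,
      ‖(s/2 : ℝ) • (h (a i) + h (a (i+1))) - ∫ x in (a i)..(a (i+1)), h x‖ ≤ D * s^3 / 2 := by
    intro i _
    have hstep : a (i+1) = a i + s := by simp [ha]; push_cast; ring
    rw [hstep]
    exact trapezoid_single h h' h'' hd1 hd2 D hD (a i) s hs
  apply le_trans (Finset.sum_le_sum hterm)
  rw [Finset.sum_const, Finset.card_range, nsmul_eq_mul]

set_option maxHeartbeats 2000000 in
theorem riemann_sum_spectral_counting
    (S₀ S₁ : ℝ → ℝ)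
    (hS₀ : ContDiff ℝ (⊤ : ℕ∞) S₀) (hS₁ : ContDiff ℝ (⊤ : ℕ∞) S₁)
    (δ : ℝ) (hδ : 0 < δ) (hS₀' : ∀ t : ℝ, δ ≤ deriv S₀ t)
    (hbound : ∀ j : ℕ, 1 ≤ j → ∃ M : ℝ,
      ∀ t : ℝ, |iteratedDeriv j S₀ t| ≤ M ∧ |iteratedDeriv j S₁ t| ≤ M)
    (g : ℝ → ℂ) (hg : ContDiff ℝ (⊤ : ℕ∞) g) (hg_supp : HasCompactSupport g) :
    ∃ K : ℕ, 1 ≤ K ∧ ∃ C : ℝ, ∀ k : ℕ, K ≤ k →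
      ∃ R : ℝ → ℝ,
        ContDiff ℝ (⊤ : ℕ∞) R ∧
        Function.LeftInverse R (fun t => S₀ t + (k : ℝ)⁻¹ * S₁ t) ∧
        Function.RightInverse R (fun t => S₀ t + (k : ℝ)⁻¹ * S₁ t) ∧
        ‖(∑' m : ℤ, g (R (2 * Real.pi * m / k))) -
            (k / (2 * Real.pi)) *
              ∫ t : ℝ, g t * ((deriv (fun s => S₀ s + (k : ℝ)⁻¹ * S₁ s) t : ℝ) : ℂ)‖ ≤
          C / k := by
  classical
  obtain ⟨M₁, hM₁⟩ := hbound 1 le_rfl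
  obtain ⟨M₂, hM₂⟩ := hbound 2 (by norm_num)
  have hit2 : ∀ f : ℝ → ℝ, iteratedDeriv 2 f = deriv (deriv f) := by
    intro f; rw [show (2:ℕ) = 1 + 1 from rfl, iteratedDeriv_succ, iteratedDeriv_one]
  have hM₁' : ∀ t, |deriv S₀ t| ≤ M₁ ∧ |deriv S₁ t| ≤ M₁ := by
    simpa [iteratedDeriv_one] using hM₁
  have hM₂' : ∀ t, |deriv (deriv S₀) t| ≤ M₂ ∧ |deriv (deriv S₁) t| ≤ M₂ := by
    simpa [hit2] using hM₂
  have hM₁0 : 0 ≤ M₁ := le_trans (abs_nonneg _) (hM₁' 0).1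
  have hM₂0 : 0 ≤ M₂ := le_trans (abs_nonneg _) (hM₂' 0).1
  -- derivatives of g
  have hgi : ContDiff ℝ (↑(⊤:ℕ∞)) g := hg.of_le (by simp)
  have hg1c : ContDiff ℝ (↑(⊤:ℕ∞)) (deriv g) := by simpa using hgi.iterate_deriv 1
  have hg2c : ContDiff ℝ (↑(⊤:ℕ∞)) (deriv (deriv g)) := by simpa using hg1c.iterate_deriv 1
  obtain ⟨G₁, hG₁⟩ := (hg_supp.deriv).exists_bound_of_continuous (hg1c.continuous)
  obtain ⟨G₂, hG₂⟩ := (hg_supp.deriv.deriv).exists_bound_of_continuous (hg2c.continuous)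
  have hG₁0 : 0 ≤ G₁ := le_trans (norm_nonneg _) (hG₁ 0)
  have hG₂0 : 0 ≤ G₂ := le_trans (norm_nonneg _) (hG₂ 0)
  -- support radius of g
  obtain ⟨A₀, hA₀⟩ := hg_supp.isBounded.subset_closedBall 0
  set A := max A₀ 0 with hAdef
  have hA0 : 0 ≤ A := le_max_right _ _
  have hA : tsupport g ⊆ Set.Icc (-A) A := by
    intro t ht
    have := hA₀ ht
    rw [Metric.mem_closedBall, Real.dist_eq, sub_zero] at this
    have h2 : |t| ≤ A := le_trans this (le_max_left _ _)
    exact ⟨neg_le_of_abs_le h2, le_of_abs_le h2⟩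
  have hgz : ∀ t : ℝ, A < |t| → g t = 0 := by
    intro t ht
    by_contra hne
    have h1 := hA (subset_tsupport g hne)
    have : |t| ≤ A := abs_le.2 ⟨h1.1, h1.2⟩
    linarith
  -- bound for |S₀| + |S₁| on the support
  obtain ⟨B, hB⟩ := (isCompact_Icc (a := -A) (b := A)).exists_bound_of_continuousOn
    (f := fun t => |S₀ t| + |S₁ t|)
    (((hS₀.continuous.abs).add (hS₁.continuous.abs)).continuousOn)
  have hB' : ∀ t ∈ Set.Icc (-A) A, |S₀ t| + |S₁ t| ≤ B := by
    intro t ht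
    have := hB t ht
    rw [Real.norm_eq_abs] at this
    exact le_trans (le_abs_self _) this
  have hB0 : 0 ≤ B := le_trans (by positivity) (hB' 0 ⟨by linarith, hA0⟩)
  -- the uniform constants
  set Rd : ℝ := 2/δ with hRddef
  have hRd0 : 0 < Rd := div_pos two_pos hδ
  set D : ℝ := (2*M₂*Rd/( (δ/2)^2 ))*G₁ + Rd^2*G₂ with hDdef
  have hD0 : 0 ≤ D := by
    apply add_nonneg
    · apply mul_nonneg _ hG₁0
      apply div_nonneg (by positivity) (by positivity)
    · exact mul_nonneg (by positivity) hG₂0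
  refine ⟨max 1 ⌈2*M₁/δ⌉₊, le_max_left _ _, 2*Real.pi*D*(B+4*Real.pi), ?_⟩
  intro k hk
  have hk1 : 1 ≤ k := le_trans (le_max_left _ _) hk
  have hk0 : (0:ℝ) < k := by exact_mod_cast Nat.lt_of_lt_of_le Nat.zero_lt_one hk1
  have hk1' : (1:ℝ) ≤ k := by exact_mod_cast hk1
  have hkinv1 : (k:ℝ)⁻¹ ≤ 1 := by
    rw [inv_le_one_iff₀]; right; exact hk1'
  have hkinv0 : 0 < (k:ℝ)⁻¹ := inv_pos.2 hk0
  have hkM : 2*M₁/δ ≤ (k:ℝ) := by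
    have h1 : (⌈2*M₁/δ⌉₊ : ℝ) ≤ k := by
      exact_mod_cast le_trans (le_max_right 1 _) hk
    exact le_trans (Nat.le_ceil _) h1
  have hkδ : 2*M₁ ≤ (k:ℝ)*δ := by
    rw [div_le_iff₀ hδ] at hkM; linarith
  set S : ℝ → ℝ := fun t => S₀ t + (k:ℝ)⁻¹ * S₁ t with hSdef
  have hSc : ContDiff ℝ (⊤ : ℕ∞) S := hS₀.add (contDiff_const.mul hS₁)
  have hd₀ : ∀ t, HasDerivAt S₀ (deriv S₀ t) t :=
    fun t => (hS₀.differentiable (by simp) t).hasDerivAt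
  have hd₁ : ∀ t, HasDerivAt S₁ (deriv S₁ t) t :=
    fun t => (hS₁.differentiable (by simp) t).hasDerivAt
  have hS₀d : ContDiff ℝ (↑(⊤:ℕ∞)) (deriv S₀) := by
    simpa using (hS₀.of_le (by simp)).iterate_deriv 1
  have hS₁d : ContDiff ℝ (↑(⊤:ℕ∞)) (deriv S₁) := by
    simpa using (hS₁.of_le (by simp)).iterate_deriv 1
  have hd₀' : ∀ t, HasDerivAt (deriv S₀) (deriv (deriv S₀) t) t :=
    fun t => (hS₀d.differentiable (by simp) t).hasDerivAt
  have hd₁' : ∀ t, HasDerivAt (deriv S₁) (deriv (deriv S₁) t) t :=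
    fun t => (hS₁d.differentiable (by simp) t).hasDerivAt
  have hder : ∀ t, HasDerivAt S (deriv S₀ t + (k:ℝ)⁻¹ * deriv S₁ t) t :=
    fun t => (hd₀ t).add ((hd₁ t).const_mul _)
  have hderiv_eq : ∀ t, deriv S t = deriv S₀ t + (k:ℝ)⁻¹ * deriv S₁ t :=
    fun t => (hder t).deriv
  have hlow : ∀ t, δ/2 ≤ deriv S t := by
    intro t
    rw [hderiv_eq]
    have h1 : |(k:ℝ)⁻¹ * deriv S₁ t| ≤ (k:ℝ)⁻¹ * M₁ := by
      rw [abs_mul, abs_of_pos hkinv0]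
      exact mul_le_mul_of_nonneg_left (hM₁' t).2 hkinv0.le
    have h2 : (k:ℝ)⁻¹ * M₁ ≤ δ/2 := by
      have h3 : M₁ ≤ (k:ℝ)*δ/2 := by linarith
      have h4 : (k:ℝ)⁻¹ * M₁ ≤ (k:ℝ)⁻¹ * ((k:ℝ)*δ/2) :=
        mul_le_mul_of_nonneg_left h3 hkinv0.le
      have h5 : (k:ℝ)⁻¹ * ((k:ℝ)*δ/2) = δ/2 := by
        field_simp
      linarith
    have h6 := hS₀' t
    have h7 := (abs_le.1 h1).1
    linarith
  have hpos : ∀ t, 0 < deriv S t := fun t => lt_of_lt_of_le (by linarith) (hlow t)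
  have hds : deriv S = fun t => deriv S₀ t + (k:ℝ)⁻¹ * deriv S₁ t := funext hderiv_eq
  have hder2 : ∀ t, HasDerivAt (deriv S) (deriv (deriv S₀) t + (k:ℝ)⁻¹ * deriv (deriv S₁) t) t := by
    intro t
    rw [hds]
    exact (hd₀' t).add ((hd₁' t).const_mul _)
  have hup2 : ∀ t, |deriv (deriv S) t| ≤ 2*M₂ := by
    intro t
    rw [(hder2 t).deriv]
    calc |deriv (deriv S₀) t + (k:ℝ)⁻¹ * deriv (deriv S₁) t|
        ≤ |deriv (deriv S₀) t| + |(k:ℝ)⁻¹ * deriv (deriv S₁) t| := abs_add_le _ _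
      _ ≤ M₂ + M₂ := by
          apply add_le_add (hM₂' t).1
          rw [abs_mul, abs_of_pos hkinv0]
          calc (k:ℝ)⁻¹ * |deriv (deriv S₁) t| ≤ 1 * |deriv (deriv S₁) t| :=
                mul_le_mul_of_nonneg_right hkinv1 (abs_nonneg _)
            _ = |deriv (deriv S₁) t| := one_mul _
            _ ≤ M₂ := (hM₂' t).2
      _ = 2*M₂ := by ring
  obtain ⟨R, hRc, hLI, hRI⟩ := exists_smooth_global_inverse S hSc (δ/2) (half_pos hδ) hlow
  refine ⟨R, hRc, hLI, hRI, ?_⟩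
  have hone : (1 : WithTop ℕ∞) ≤ ↑(⊤:ℕ∞) := by exact_mod_cast (le_top : (1:ℕ∞) ≤ ⊤)
  have hRcont : Continuous R := hRc.continuous
  have hRd : ∀ x, HasDerivAt R ((deriv S (R x))⁻¹) x := fun x =>
    HasDerivAt.of_local_left_inverse hRcont.continuousAt
      ((hSc.differentiable (by simp) (R x)).hasDerivAt) (ne_of_gt (hpos _))
      (Filter.Eventually.of_forall hRI)
  set h : ℝ → ℂ := fun x => g (R x) with hhdef
  set p : ℝ → ℂ := fun x => (deriv S (R x))⁻¹ • deriv g (R x) with hpdef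
  have hgd : ∀ t, HasDerivAt g (deriv g t) t := fun t => (hgi.differentiable (by simp) t).hasDerivAt
  have hgd2 : ∀ t, HasDerivAt (deriv g) (deriv (deriv g) t) t :=
    fun t => (hg1c.differentiable (by simp) t).hasDerivAt
  have hd1 : ∀ x, HasDerivAt h (p x) x := fun x => HasDerivAt.scomp x (hgd (R x)) (hRd x)
  have hSd2 : ∀ t, HasDerivAt (deriv S) (deriv (deriv S) t) t := by
    intro t
    have h1 := hder2 t
    rwa [← (hder2 t).deriv] at h1
  set q : ℝ → ℂ := fun x => (deriv S (R x))⁻¹ • ((deriv S (R x))⁻¹ • deriv (deriv g) (R x))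
      + (-(deriv (deriv S) (R x) * (deriv S (R x))⁻¹) / (deriv S (R x))^2) • deriv g (R x)
      with hqdef
  have hd2 : ∀ x, HasDerivAt p (q x) x := by
    intro x
    have hrd : HasDerivAt (fun y => (deriv S (R y))⁻¹)
        (-(deriv (deriv S) (R x) * (deriv S (R x))⁻¹) / (deriv S (R x))^2) x :=
      (HasDerivAt.comp x (hSd2 (R x)) (hRd x)).inv (ne_of_gt (hpos _))
    have hG1d : HasDerivAt (fun y => deriv g (R y)) ((deriv S (R x))⁻¹ • deriv (deriv g) (R x)) x :=
      HasDerivAt.scomp x (hgd2 (R x)) (hRd x)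
    exact hrd.smul hG1d
  have hrb : ∀ t : ℝ, (deriv S t)⁻¹ ≤ Rd := by
    intro t
    have h1 : (δ/2)⁻¹ = Rd := by rw [hRddef]; field_simp
    rw [← h1]
    exact inv_anti₀ (half_pos hδ) (hlow t)
  have hrpos : ∀ t, 0 < (deriv S t)⁻¹ := fun t => inv_pos.2 (hpos t)
  have hqb : ∀ x, ‖q x‖ ≤ D := by
    intro x
    rw [hqdef]
    apply le_trans (norm_add_le _ _)
    have e1 : ‖(deriv S (R x))⁻¹ • ((deriv S (R x))⁻¹ • deriv (deriv g) (R x))‖ ≤ Rd^2 * G₂ := by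
      rw [norm_smul, norm_smul, Real.norm_eq_abs, abs_of_pos (hrpos _)]
      calc (deriv S (R x))⁻¹ * ((deriv S (R x))⁻¹ * ‖deriv (deriv g) (R x)‖)
          ≤ Rd * (Rd * G₂) := by
            apply mul_le_mul (hrb _) _ (mul_nonneg (hrpos _).le (norm_nonneg _)) hRd0.le
            apply mul_le_mul (hrb _) (hG₂ _) (norm_nonneg _) hRd0.le
        _ = Rd^2 * G₂ := by ring
    have e2 : ‖(-(deriv (deriv S) (R x) * (deriv S (R x))⁻¹) / (deriv S (R x))^2) •
        deriv g (R x)‖ ≤ (2*M₂*Rd/((δ/2)^2))*G₁ := by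
      rw [norm_smul, Real.norm_eq_abs]
      have hnum : 0 ≤ 2*M₂*Rd/((δ/2)^2) := by
        apply div_nonneg (by positivity) (by positivity)
      apply mul_le_mul _ (hG₁ _) (norm_nonneg _) hnum
      rw [abs_div, abs_neg, abs_mul, abs_of_pos (hrpos _), abs_of_pos (pow_pos (hpos _) 2)]
      have hnum2 : (0:ℝ) ≤ 2*M₂ := by linarith
      apply div_le_div₀ (by nlinarith [hRd0.le])
        (mul_le_mul (hup2 _) (hrb _) (hrpos _).le hnum2) (by positivity)
        (pow_le_pow_left₀ (half_pos hδ).le (hlow _) 2)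
    calc ‖(deriv S (R x))⁻¹ • ((deriv S (R x))⁻¹ • deriv (deriv g) (R x))‖
          + ‖(-(deriv (deriv S) (R x) * (deriv S (R x))⁻¹) / (deriv S (R x))^2) •
              deriv g (R x)‖
        ≤ Rd^2 * G₂ + (2*M₂*Rd/((δ/2)^2))*G₁ := add_le_add e1 e2
      _ = D := by rw [hDdef]; ring
  -- support geometry
  have hmono : StrictMono S := strictMono_of_deriv_pos hpos
  have hhz : ∀ x : ℝ, B < |x| → h x = 0 := by
    intro x hx
    show g (R x) = 0
    by_contra hne
    have h1 := hA (subset_tsupport g hne)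
    have h2 : |S (R x)| ≤ B := by
      have h3 : |S₀ (R x) + (k:ℝ)⁻¹ * S₁ (R x)| ≤ |S₀ (R x)| + |(k:ℝ)⁻¹ * S₁ (R x)| :=
        abs_add_le _ _
      have h4 : |(k:ℝ)⁻¹ * S₁ (R x)| ≤ |S₁ (R x)| := by
        rw [abs_mul, abs_of_pos hkinv0]
        calc (k:ℝ)⁻¹ * |S₁ (R x)| ≤ 1 * |S₁ (R x)| :=
              mul_le_mul_of_nonneg_right hkinv1 (abs_nonneg _)
          _ = |S₁ (R x)| := one_mul _
      have h5 := hB' (R x) h1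
      calc |S (R x)| = |S₀ (R x) + (k:ℝ)⁻¹ * S₁ (R x)| := rfl
        _ ≤ |S₀ (R x)| + |(k:ℝ)⁻¹ * S₁ (R x)| := h3
        _ ≤ |S₀ (R x)| + |S₁ (R x)| := by linarith
        _ ≤ B := h5
    rw [hRI x] at h2
    linarith
  set s : ℝ := 2*Real.pi/(k:ℝ) with hsdef
  have hs0 : 0 < s := div_pos (by positivity) hk0
  set N := ⌈B/s⌉₊ with hNdef
  have hNs : B ≤ (N:ℝ)*s := by
    rw [← div_le_iff₀ hs0]
    exact Nat.le_ceil _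
  have hNlt : (N:ℝ) < B/s + 1 := Nat.ceil_lt_add_one (div_nonneg hB0 hs0.le)
  set n := 2*N+2 with hndef
  set c : ℝ := -(((N:ℝ)+1)*s) with hcdef
  have hcn : c + (n:ℝ)*s = ((N:ℝ)+1)*s := by rw [hcdef, hndef]; push_cast; ring
  have hcB : c < -B := by
    rw [hcdef]
    have : ((N:ℝ)+1)*s = (N:ℝ)*s + s := by ring
    linarith
  have hnB : B < c + (n:ℝ)*s := by
    rw [hcn]
    have : ((N:ℝ)+1)*s = (N:ℝ)*s + s := by ring
    linarith
  -- the tsum is a finite sum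
  have htsum : (∑' m : ℤ, g (R (2*Real.pi*m/k))) = ∑ i ∈ Finset.range (n+1), h (c + (i:ℝ)*s) := by
    have hfun : ∀ m : ℤ, g (R (2*Real.pi*(m:ℝ)/(k:ℝ))) = h ((m:ℝ)*s) := by
      intro m
      have harg : 2*Real.pi*(m:ℝ)/(k:ℝ) = (m:ℝ)*s := by rw [hsdef]; ring
      show g (R (2*Real.pi*(m:ℝ)/(k:ℝ))) = g (R ((m:ℝ)*s))
      rw [harg]
    rw [tsum_congr hfun]
    have hvan : ∀ m : ℤ, m ∉ Finset.Icc (-(N:ℤ)-1) ((N:ℤ)+1) → h ((m:ℝ)*s) = 0 := by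
      intro m hm
      rw [Finset.mem_Icc, not_and_or, not_le, not_le] at hm
      have habs : (N:ℝ)+2 ≤ |(m:ℝ)| := by
        rcases hm with hm|hm
        · have h1 : m ≤ -(N:ℤ)-2 := by omega
          have h2 : (m:ℝ) ≤ -((N:ℝ)+2) := by
            have h2a : (m:ℝ) ≤ ((-(N:ℤ)-2 : ℤ) : ℝ) := by exact_mod_cast h1
            push_cast at h2a
            linarith
          rw [abs_of_nonpos (by linarith)]
          linarith
        · have h1 : (N:ℤ)+2 ≤ m := by omega
          have h2 : ((N:ℝ)+2) ≤ (m:ℝ) := by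
            have h2a : ((((N:ℤ)+2 : ℤ)) : ℝ) ≤ (m:ℝ) := by exact_mod_cast h1
            push_cast at h2a
            linarith
          rw [abs_of_nonneg (by linarith)]
          linarith
      apply hhz
      rw [abs_mul, abs_of_pos hs0]
      have h6 : ((N:ℝ)+2)*s ≤ |(m:ℝ)| * s := mul_le_mul_of_nonneg_right habs hs0.le
      nlinarith
    rw [tsum_eq_sum hvan]
    have hmap : Finset.Icc (-(N:ℤ)-1) ((N:ℤ)+1)
        = Finset.map ⟨fun i : ℕ => -(N:ℤ)-1 + i, show Function.Injective _ from fun a b hab => by simp only [add_right_inj, Nat.cast_inj] at hab; exact hab⟩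
            (Finset.range (n+1)) := by
      ext m
      simp only [Finset.mem_Icc, Finset.mem_map, Finset.mem_range,
        Function.Embedding.coeFn_mk, hndef]
      constructor
      · intro hm
        exact ⟨(m + N + 1).toNat, by omega, by omega⟩
      · rintro ⟨i, hi, rfl⟩
        omega
    rw [hmap, Finset.sum_map]
    apply Finset.sum_congr rfl
    intro i _
    simp only [Function.Embedding.coeFn_mk]
    congr 1
    rw [hcdef]
    push_cast
    ring
  -- boundary nodes vanish
  have hz0 : h (c + ((0:ℕ):ℝ)*s) = 0 := by
    apply hhz
    have he : c + ((0:ℕ):ℝ)*s = c := by push_cast; ring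
    rw [he, abs_of_neg (by linarith : c < 0)]
    linarith
  have hzn : h (c + ((n:ℕ):ℝ)*s) = 0 := by
    apply hhz
    rw [abs_of_pos (by linarith : 0 < c + (n:ℝ)*s)]
    exact hnB
  -- the full integral equals the interval integral
  have hhc : Continuous h := hg.continuous.comp hRcont
  have hcle : c ≤ c + (n:ℝ)*s := by linarith
  have hJ1 : (∫ x in c..(c + (n:ℝ)*s), h x) = ∫ x : ℝ, h x := by
    rw [intervalIntegral.integral_of_le hcle]
    apply MeasureTheory.setIntegral_eq_integral_of_forall_compl_eq_zero
    intro x hx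
    rw [Set.mem_Ioc, not_and_or, not_lt, not_le] at hx
    apply hhz
    rcases hx with hx|hx
    · rw [abs_of_neg (by linarith : x < 0)]
      linarith
    · rw [abs_of_pos (by linarith : 0 < x)]
      linarith
  -- change of variables
  set A' : ℝ := A + 1 with hA'def
  have hSA : ∀ y : ℝ, h y ≠ 0 → S (-A') < y ∧ y < S A' := by
    intro y hy
    have h1 := hA (subset_tsupport g hy)
    have h2 : -A' < R y := by
      have := h1.1
      rw [hA'def]
      linarith
    have h3 : R y < A' := by
      have := h1.2
      rw [hA'def]
      linarith
    constructor
    · have h4 := hmono h2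
      rwa [hRI y] at h4
    · have h4 := hmono h3
      rwa [hRI y] at h4
  have hderS : ∀ t, HasDerivAt S (deriv S t) t := by
    intro t
    have h1 := hder t
    rwa [← (hder t).deriv] at h1
  have hdSc : Continuous (deriv S) := by
    rw [hds]
    exact (hS₀d.continuous).add (continuous_const.mul hS₁d.continuous)
  have hJ2a : (∫ t : ℝ, g t * ((deriv S t : ℝ) : ℂ))
      = ∫ t in (-A')..A', g t * ((deriv S t : ℝ) : ℂ) := by
    symm
    rw [intervalIntegral.integral_of_le (by linarith : -A' ≤ A')]
    apply MeasureTheory.setIntegral_eq_integral_of_forall_compl_eq_zero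
    intro x hx
    rw [Set.mem_Ioc, not_and_or, not_lt, not_le] at hx
    have hgx : g x = 0 := by
      apply hgz
      rcases hx with hx|hx
      · rw [abs_of_nonpos (by rw [hA'def] at hx; linarith)]
        rw [hA'def] at hx
        linarith
      · rw [abs_of_pos (by rw [hA'def] at hx; linarith)]
        rw [hA'def] at hx
        linarith
    rw [hgx, zero_mul]
  have hJ2b : (∫ t in (-A')..A', deriv S t • (h ∘ S) t) = ∫ y in (S (-A'))..(S A'), h y :=
    intervalIntegral.integral_comp_smul_deriv (fun x _ => hderS x) hdSc.continuousOn hhc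
  have hJ2c : (fun t => deriv S t • (h ∘ S) t) = fun t => g t * ((deriv S t : ℝ) : ℂ) := by
    funext t
    have h1 : (h ∘ S) t = g t := by
      show g (R (S t)) = g t
      rw [hLI t]
    rw [h1, Complex.real_smul, mul_comm]
  have hJ2d : (∫ y in (S (-A'))..(S A'), h y) = ∫ x : ℝ, h x := by
    rw [intervalIntegral.integral_of_le (hmono.le_iff_le.2 (by linarith : -A' ≤ A'))]
    apply MeasureTheory.setIntegral_eq_integral_of_forall_compl_eq_zero
    intro x hx
    by_contra hne
    exact hx ⟨(hSA x hne).1, (hSA x hne).2.le⟩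
  have hJ2 : (∫ t : ℝ, g t * ((deriv S t : ℝ) : ℂ)) = ∫ x : ℝ, h x := by
    rw [hJ2a, ← hJ2c, hJ2b, hJ2d]
  -- the trapezoid estimate
  have htrap := trapezoid_sum h p q hd1 hd2 D hqb s hs0.le c n
  have halg := trapsum_algebra (fun i => h (c + (i:ℝ)*s)) s n
  have hsum_eq : (∑ i ∈ Finset.range n, (s/2:ℝ) • (h (c + (i:ℝ)*s) + h (c + ((i:ℝ)+1)*s)))
      = ∑ i ∈ Finset.range n, (s/2:ℝ) • (h (c + (i:ℝ)*s) + h (c + ((i+1:ℕ):ℝ)*s)) := by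
    apply Finset.sum_congr rfl
    intro i _
    have he : c + ((i:ℝ)+1)*s = c + ((i+1:ℕ):ℝ)*s := by push_cast; ring
    rw [he]
  rw [hsum_eq, halg, hz0, hzn] at htrap
  simp only [add_zero, smul_zero, sub_zero] at htrap
  rw [hJ1] at htrap
  -- htrap : ‖s • (∑ i ∈ range (n+1), h (c+i*s)) - ∫ x, h x‖ ≤ n * (D*s^3/2)
  rw [htsum, hJ2]
  set T : ℂ := ∑ i ∈ Finset.range (n+1), h (c + (i:ℝ)*s) with hT
  set J : ℂ := ∫ x : ℝ, h x with hJ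
  have hcoef : ((k:ℂ) / (2*(Real.pi:ℂ))) = ((s⁻¹:ℝ):ℂ) := by
    rw [hsdef]
    push_cast
    rw [inv_div]
  rw [hcoef]
  have hnorm : ‖T - ((s⁻¹:ℝ):ℂ) * J‖ = s⁻¹ * ‖s • T - J‖ := by
    rw [← Complex.real_smul]
    have h1 : s • (T - s⁻¹ • J) = s • T - J := by
      rw [smul_sub, smul_smul, mul_inv_cancel₀ (ne_of_gt hs0), one_smul]
    rw [← h1, norm_smul, Real.norm_eq_abs, abs_of_pos hs0, ← mul_assoc,
      inv_mul_cancel₀ (ne_of_gt hs0), one_mul]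
  rw [hnorm]
  calc s⁻¹ * ‖s • T - J‖ ≤ s⁻¹ * ((n:ℝ)*(D*s^3/2)) :=
        mul_le_mul_of_nonneg_left htrap (inv_nonneg.2 hs0.le)
    _ = ((N:ℝ)+1)*s * (D*s) := by
        rw [hndef]
        push_cast
        field_simp
    _ ≤ (B + 2*s) * (D*s) := by
        apply mul_le_mul_of_nonneg_right _ (mul_nonneg hD0 hs0.le)
        have h1 := mul_lt_mul_of_pos_right hNlt hs0
        rw [add_mul, div_mul_cancel₀ _ (ne_of_gt hs0)] at h1
        nlinarith
    _ ≤ (B + 4*Real.pi) * (D*s) := by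
        apply mul_le_mul_of_nonneg_right _ (mul_nonneg hD0 hs0.le)
        have hπ : 0 < Real.pi := Real.pi_pos
        have h4 : s ≤ 2*Real.pi := by
          rw [hsdef]
          exact div_le_self (by positivity) hk1'
        linarith
    _ = 2*Real.pi*D*(B+4*Real.pi)/(k:ℝ) := by
        rw [hsdef]
        field_simp
end
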